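/- arXiv:2605.18000 — 5 statements merged into one kernel-verified Lean document; each statement's English description precedes it below -/
import Mathlib

section
/- Let A be the real Gelfand order and J its Jacobson radical. Then A/J is isomorphic as an ℝ-algebra to ℂ × ℝ. -/
/-!
Taking constant terms maps the Gelfand order onto the algebra of real matrices
`!![a, b, 0; -b, a, 0; x, y, c]` (lift such a matrix by constant power series). On that algebra,
`(a + b i, c)` is multiplicative: the upper-left block `!![a, b; -b, a]` multiplies like `a + b i`,
and the bottom row `x, y` never contributes to the diagonal blocks of a product. The kernel
consists of the matrices with `a = b = c = 0`, which is exactly `J`.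
-/

open PowerSeries

noncomputable section

namespace PowerSeries

variable (R : Type*) [CommRing R]

def constantCoeffAlgHom : R⟦X⟧ →ₐ[R] R :=
  { constantCoeff with commutes' := constantCoeff_C }

@[simp]
lemma constantCoeffAlgHom_apply (f : R⟦X⟧) : constantCoeffAlgHom R f = constantCoeff f := rfl

lemma constantCoeffAlgHom_mapMatrix_map_C {n : Type*} [Fintype n] [DecidableEq n]
    (m : Matrix n n R) : (constantCoeffAlgHom R).mapMatrix (m.map C) = m := by
  ext i j
  simp

end PowerSeries

section GelfandOrder

variable (R : Type*) [CommRing R]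

def gelfandConstantTerms : Subalgebra R (Matrix (Fin 3) (Fin 3) R) where
  carrier := {m | m 0 2 = 0 ∧ m 1 2 = 0 ∧ m 0 0 = m 1 1 ∧ m 1 0 = -m 0 1}
  mul_mem' := by
    rintro a b ⟨ha02, ha12, ha00, ha10⟩ ⟨hb02, hb12, hb00, hb10⟩
    simp only [Set.mem_ofPred_eq, Matrix.mul_apply, Fin.sum_univ_three]
    rw [ha02, ha12, ha00, ha10, hb02, hb12, hb00, hb10]
    refine ⟨by ring, by ring, by ring, by ring⟩
  add_mem' := by
    rintro a b ⟨ha02, ha12, ha00, ha10⟩ ⟨hb02, hb12, hb00, hb10⟩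
    simp only [Set.mem_ofPred_eq, Matrix.add_apply]
    rw [ha02, ha12, ha00, ha10, hb02, hb12, hb00, hb10]
    refine ⟨by ring, by ring, by ring, by ring⟩
  algebraMap_mem' r := by
    simp [Matrix.algebraMap_eq_diagonal]

variable {R} in
@[simp]
lemma mem_gelfandConstantTerms (m : Matrix (Fin 3) (Fin 3) R) :
    m ∈ gelfandConstantTerms R ↔ m 0 2 = 0 ∧ m 1 2 = 0 ∧ m 0 0 = m 1 1 ∧ m 1 0 = -m 0 1 :=
  Iff.rfl

def gelfandOrder : Subalgebra R (Matrix (Fin 3) (Fin 3) R⟦X⟧) :=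
  (gelfandConstantTerms R).comap (constantCoeffAlgHom R).mapMatrix

def gelfandOrder.constantTerms : gelfandOrder R →ₐ[R] gelfandConstantTerms R :=
  ((constantCoeffAlgHom R).mapMatrix.comp (gelfandOrder R).val).codRestrict _ fun a => a.2

lemma gelfandOrder.constantTerms_surjective :
    Function.Surjective (gelfandOrder.constantTerms R) := by
  rintro ⟨m, hm⟩
  have hlift : (constantCoeffAlgHom R).mapMatrix (m.map C) = m :=
    constantCoeffAlgHom_mapMatrix_map_C R m
  exact ⟨⟨m.map C, show _ ∈ gelfandConstantTerms R from hlift ▸ hm⟩, Subtype.ext hlift⟩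

end GelfandOrder

namespace gelfandConstantTerms

def toComplex : gelfandConstantTerms ℝ →ₐ[ℝ] ℂ where
  toFun m := ⟨m.1 0 0, m.1 0 1⟩
  map_one' := by apply Complex.ext <;> simp
  map_mul' := by
    rintro ⟨a, ha02, -, -, -⟩ ⟨b, -, -, hb00, hb10⟩
    apply Complex.ext <;> simp [Matrix.mul_apply, Fin.sum_univ_three, ha02, hb10, ← hb00]
    ring
  map_zero' := by apply Complex.ext <;> simp
  map_add' _ _ := by apply Complex.ext <;> simp
  commutes' r := by apply Complex.ext <;> simp [Matrix.algebraMap_eq_diagonal]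

def corner : gelfandConstantTerms ℝ →ₐ[ℝ] ℝ where
  toFun m := m.1 2 2
  map_one' := by simp
  map_mul' := by
    rintro a ⟨b, hb02, hb12, -, -⟩
    simp [Matrix.mul_apply, Fin.sum_univ_three, hb02, hb12]
  map_zero' := by simp
  map_add' _ _ := by simp
  commutes' r := by simp [Matrix.algebraMap_eq_diagonal]

@[simp]
lemma toComplex_apply (m : gelfandConstantTerms ℝ) : toComplex m = ⟨m.1 0 0, m.1 0 1⟩ := rfl

@[simp]
lemma corner_apply (m : gelfandConstantTerms ℝ) : corner m = m.1 2 2 := rfl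

def toComplexProd : gelfandConstantTerms ℝ →ₐ[ℝ] ℂ × ℝ := toComplex.prod corner

lemma toComplexProd_surjective : Function.Surjective toComplexProd := by
  rintro ⟨z, r⟩
  refine ⟨⟨!![z.re, z.im, 0; -z.im, z.re, 0; 0, 0, r], by simp⟩, ?_⟩
  apply Prod.ext <;> simp [toComplexProd]

lemma toComplexProd_eq_zero_iff (m : gelfandConstantTerms ℝ) :
    toComplexProd m = 0 ↔
      m.1 0 0 = 0 ∧ m.1 0 1 = 0 ∧ m.1 1 0 = 0 ∧ m.1 1 1 = 0 ∧ m.1 2 2 = 0 := by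
  obtain ⟨m, -, -, h00, h10⟩ := m
  simp [toComplexProd, Prod.ext_iff, Complex.ext_iff, h10, ← h00]
  tauto

end gelfandConstantTerms

end

/-- `A/J ≅ ℂ × ℝ`, where `A ⊆ M₃(ℝ[[t]])` is the real Gelfand order
(matrices with `a₁₃, a₂₃ ∈ (t)` and constant terms satisfying `a̅₁₁ = a̅₂₂`,
`a̅₂₁ = -a̅₁₂`) and `J` is its Jacobson radical (those elements of `A` whose
constant terms in the upper-left `2×2` block and in position `(3,3)` vanish):
there is a surjective `ℝ`-algebra homomorphism `A → ℂ × ℝ` with kernel `J`. -/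
theorem stmt8 :
    ∃ S : Subalgebra ℝ (Matrix (Fin 3) (Fin 3) (PowerSeries ℝ)),
      (S : Set (Matrix (Fin 3) (Fin 3) (PowerSeries ℝ))) =
        {a | constantCoeff (R := ℝ) (a 0 2) = 0 ∧ constantCoeff (R := ℝ) (a 1 2) = 0 ∧
             constantCoeff (R := ℝ) (a 0 0) = constantCoeff (R := ℝ) (a 1 1) ∧
             constantCoeff (R := ℝ) (a 1 0) = -constantCoeff (R := ℝ) (a 0 1)} ∧
      ∃ π : S →ₐ[ℝ] (ℂ × ℝ),
        Function.Surjective π ∧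
        ∀ x : S, π x = 0 ↔
          (constantCoeff (R := ℝ) ((x : Matrix (Fin 3) (Fin 3) (PowerSeries ℝ)) 0 0) = 0 ∧
           constantCoeff (R := ℝ) ((x : Matrix (Fin 3) (Fin 3) (PowerSeries ℝ)) 0 1) = 0 ∧
           constantCoeff (R := ℝ) ((x : Matrix (Fin 3) (Fin 3) (PowerSeries ℝ)) 1 0) = 0 ∧
           constantCoeff (R := ℝ) ((x : Matrix (Fin 3) (Fin 3) (PowerSeries ℝ)) 1 1) = 0 ∧
           constantCoeff (R := ℝ) ((x : Matrix (Fin 3) (Fin 3) (PowerSeries ℝ)) 2 2) = 0) := by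
  refine ⟨gelfandOrder ℝ, rfl, gelfandConstantTerms.toComplexProd.comp (gelfandOrder.constantTerms ℝ),
    gelfandConstantTerms.toComplexProd_surjective.comp (gelfandOrder.constantTerms_surjective ℝ),
    fun x => gelfandConstantTerms.toComplexProd_eq_zero_iff _⟩
end

section
/- Let c ∈ ℝ, d ∈ ℝ*, λ ∈ ℝ*. There exist matrices η, ξ in C = {[[α,-β],[β,α]] : α,β ∈ ℝ} such that η · [[1,0],[c,d]] · ξ = [[1,0],[0,λ]] if and only if λ² - ((d² + c² + 1)/d)·λ + 1 = 0. -/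
/-!
Identify `C` with `ℂ` through the regular representation `ι` on the basis `(1, i)`. As `ξ` ranges
over the nonzero elements of `C`, so does `ξ⁻¹`, hence `η M ξ = D` is solvable iff `η M = D ζ` is
solvable with `ζ ≠ 0`. Comparing entries, `ζ` is determined by `η = a + b i`, and `(a, b)` must be a
nonzero solution of the homogeneous system with matrix `[[λ - d, -λ c], [c, 1 - λ d]]`; its
determinant is `-(d λ² - (d² + c² + 1) λ + d)`.
-/

open Matrix

local notation "ι" => Algebra.leftMulMatrix Complex.basisOneI

theorem exists_map_mul_mul_map_eq_iff {K R F : Type*} [GroupWithZero K] [MonoidWithZero R]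
    [FunLike F K R] [MonoidWithZeroHomClass F K R] (f : F) {M D : R} (hD : D ≠ 0) :
    (∃ z w, f z * M * f w = D) ↔ ∃ z w, w ≠ 0 ∧ f z * M = D * f w := by
  constructor
  · rintro ⟨z, w, h⟩
    have hw : w ≠ 0 := by
      rintro rfl
      exact hD (by simpa using h.symm)
    refine ⟨z, w⁻¹, inv_ne_zero hw, ?_⟩
    rw [← h, mul_assoc, ← map_mul, mul_inv_cancel₀ hw, map_one, mul_one]
  · rintro ⟨z, w, hw, h⟩
    refine ⟨z, w⁻¹, ?_⟩
    rw [h, mul_assoc, ← map_mul, mul_inv_cancel₀ hw, map_one, mul_one]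

theorem exists_leftMulMatrix_complex_eq_iff (η : Matrix (Fin 2) (Fin 2) ℝ) :
    (∃ z : ℂ, ι z = η) ↔ ∃ α β : ℝ, η = !![α, -β; β, α] := by
  simp only [Algebra.leftMulMatrix_complex]
  constructor
  · rintro ⟨z, rfl⟩
    exact ⟨z.re, z.im, rfl⟩
  · rintro ⟨α, β, rfl⟩
    exact ⟨⟨α, β⟩, rfl⟩

theorem leftMulMatrix_mul_eq_diag_mul_iff (c d lam : ℝ) (z w : ℂ) :
    ι z * !![1, 0; c, d] = !![1, 0; 0, lam] * ι w ↔
      w = ⟨z.re - z.im * c, z.im * d⟩ ∧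
        !![lam - d, -(lam * c); c, 1 - lam * d] *ᵥ ![z.re, z.im] = 0 := by
  simp only [Algebra.leftMulMatrix_complex, mul_fin_two, mulVec_fin_two, ← ext_iff,
    Fin.forall_fin_two, of_apply, cons_val', cons_val_zero, cons_val_one, empty_val',
    cons_val_fin_one, cons_eq_zero_iff, zero_empty, and_true, Complex.ext_iff]
  constructor
  · rintro ⟨⟨h00, h01⟩, h10, h11⟩
    exact ⟨⟨by linarith, by linarith⟩, by linear_combination lam * h00 - h11,
      by linear_combination h10 + lam * h01⟩
  · rintro ⟨⟨hre, him⟩, e0, e1⟩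
    exact ⟨⟨by linarith, by linarith⟩, by linear_combination e1 - lam * him,
      by linear_combination -e0 - lam * hre⟩

theorem exists_leftMulMatrix_mul_eq_diag_mul_iff {c d : ℝ} (lam : ℝ) (hd : d ≠ 0) :
    (∃ z w : ℂ, w ≠ 0 ∧ ι z * !![1, 0; c, d] = !![1, 0; 0, lam] * ι w) ↔
      ∃ v ≠ 0, !![lam - d, -(lam * c); c, 1 - lam * d] *ᵥ v = 0 := by
  simp only [leftMulMatrix_mul_eq_diag_mul_iff]
  constructor
  · rintro ⟨z, _, hw, rfl, hv⟩
    refine ⟨_, ?_, hv⟩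
    contrapose! hw
    simp_all [Complex.ext_iff]
  · rintro ⟨v, hv, hNv⟩
    refine ⟨⟨v 0, v 1⟩, _, ?_, rfl, ?_⟩
    · intro hw
      have h1 : v 1 = 0 := by simpa [hd] using congrArg Complex.im hw
      have h0 : v 0 = 0 := by simpa [h1] using congrArg Complex.re hw
      exact hv (by ext i; fin_cases i <;> assumption)
    · convert hNv
      ext i; fin_cases i <;> rfl

theorem stmt11_general (c d lam : ℝ) (hd : d ≠ 0) :
    (∃ η ξ : Matrix (Fin 2) (Fin 2) ℝ,
        (∃ α β : ℝ, η = !![α, -β; β, α]) ∧ (∃ α β : ℝ, ξ = !![α, -β; β, α]) ∧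
        η * !![1, 0; c, d] * ξ = !![1, 0; 0, lam]) ↔
      lam ^ 2 - ((d ^ 2 + c ^ 2 + 1) / d) * lam + 1 = 0 := by
  have hD : !![(1 : ℝ), 0; 0, lam] ≠ 0 := fun h ↦ one_ne_zero (congrFun₂ h 0 0)
  simp only [← exists_leftMulMatrix_complex_eq_iff]
  calc _ ↔ ∃ z w : ℂ, ι z * !![1, 0; c, d] * ι w = !![1, 0; 0, lam] := by
        constructor
        · rintro ⟨_, _, ⟨z, rfl⟩, ⟨w, rfl⟩, h⟩
          exact ⟨z, w, h⟩
        · rintro ⟨z, w, h⟩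
          exact ⟨_, _, ⟨z, rfl⟩, ⟨w, rfl⟩, h⟩
    _ ↔ ∃ z w : ℂ, w ≠ 0 ∧ ι z * !![1, 0; c, d] = !![1, 0; 0, lam] * ι w :=
        exists_map_mul_mul_map_eq_iff _ hD
    _ ↔ ∃ v ≠ 0, !![lam - d, -(lam * c); c, 1 - lam * d] *ᵥ v = 0 :=
        exists_leftMulMatrix_mul_eq_diag_mul_iff lam hd
    _ ↔ (!![lam - d, -(lam * c); c, 1 - lam * d]).det = 0 := exists_mulVec_eq_zero_iff
    _ ↔ _ := by
        rw [det_fin_two_of]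
        field_simp
        constructor <;> intro h <;> linear_combination -h

theorem stmt11 (c d lam : ℝ) (hd : d ≠ 0) (hlam : lam ≠ 0) :
    (∃ η ξ : Matrix (Fin 2) (Fin 2) ℝ,
        (∃ α β : ℝ, η = !![α, -β; β, α]) ∧ (∃ α β : ℝ, ξ = !![α, -β; β, α]) ∧
        η * !![1, 0; c, d] * ξ = !![1, 0; 0, lam]) ↔
      lam ^ 2 - ((d ^ 2 + c ^ 2 + 1) / d) * lam + 1 = 0 :=
  stmt11_general c d lam hd
end

section
/- For any c ∈ ℝ and d ∈ ℝ*, the polynomial v² - ((d² + c² + 1)/d)·v + 1 has a real root; equivalently, for every matrix [[1,0],[c,d]] with d ≠ 0 there exist η, ξ ∈ C and λ ∈ ℝ* with η·[[1,0],[c,d]]·ξ = diag(1, λ). -/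
/-!
Write `s = (d² + c² + 1)/d`. Since `d² + c² + 1 ≥ 2|d|`, we have `|s| ≥ 2`, so `x² - s x + 1` has
nonnegative discriminant and a real root `λ`.

Identifying `!![α, -β; β, α]` with `α + β i`, pick `ξ = !![1, -q; q, 1]` with `q = (d - λ)/c`.
Then `!![1, 0; c, d] * ξ = !![1, -v; v, 1] * diag(1, λ)` with `v = c + d q`, exactly because `λ`
is a root; multiplying on the left by the inverse `η` of `!![1, -v; v, 1]` gives `diag(1, λ)`.
When `c = 0` the matrix is already diagonal and `λ = d` works.
-/

open Matrix

lemma exists_sq_sub_mul_add_one_eq_zero {s : ℝ} (hs : 2 ≤ |s|) :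
    ∃ x : ℝ, x ^ 2 - s * x + 1 = 0 := by
  have hdisc : discrim 1 (-s) 1 = √(s ^ 2 - 4) * √(s ^ 2 - 4) := by
    have : 4 ≤ s ^ 2 := by nlinarith [sq_abs s, abs_nonneg s]
    rw [Real.mul_self_sqrt (by linarith), discrim]
    ring
  obtain ⟨x, hx⟩ := exists_quadratic_eq_zero one_ne_zero ⟨_, hdisc⟩
  exact ⟨x, by linear_combination hx⟩

lemma two_le_abs_sq_add_sq_add_one_div (c : ℝ) {d : ℝ} (hd : d ≠ 0) :
    2 ≤ |(d ^ 2 + c ^ 2 + 1) / d| := by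
  rw [abs_div, le_div_iff₀ (abs_pos.mpr hd), abs_of_pos (by positivity : 0 < d ^ 2 + c ^ 2 + 1)]
  nlinarith [sq_nonneg (|d| - 1), sq_abs d, sq_nonneg c]

lemma conj_div_normSq_mul_self_fin_two {α β : ℝ} (h : α ^ 2 + β ^ 2 ≠ 0) :
    !![α / (α ^ 2 + β ^ 2), -(-β / (α ^ 2 + β ^ 2)); -β / (α ^ 2 + β ^ 2), α / (α ^ 2 + β ^ 2)] *
      !![α, -β; β, α] = 1 := by
  simp only [mul_fin_two, one_fin_two, EmbeddingLike.apply_eq_iff_eq, vecCons_inj, and_true]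
  refine ⟨⟨?_, ?_⟩, ?_, ?_⟩ <;> field_simp <;> ring

lemma lower_triangular_mul_eq_mul_diagonal {c d q v l : ℝ}
    (hv : v = c + d * q) (hl : l = d - c * q) (hq : q = l * v) :
    !![1, 0; c, d] * !![1, -q; q, 1] = !![1, -v; v, 1] * !![1, 0; 0, l] := by
  simp only [mul_fin_two, EmbeddingLike.apply_eq_iff_eq, vecCons_inj, and_true]
  exact ⟨⟨by ring, by linear_combination -hq⟩, by linear_combination -hv, by linear_combination -hl⟩

lemma exists_lower_triangular_mul_eq_mul_diagonal (c : ℝ) {d l : ℝ} (hd : d ≠ 0)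
    (hl : l ^ 2 - ((d ^ 2 + c ^ 2 + 1) / d) * l + 1 = 0) :
    ∃ l' q v : ℝ, l' ≠ 0 ∧
      !![1, 0; c, d] * !![1, -q; q, 1] = !![1, -v; v, 1] * !![1, 0; 0, l'] := by
  rcases eq_or_ne c 0 with rfl | hc
  · exact ⟨d, 0, 0, hd, lower_triangular_mul_eq_mul_diagonal (by ring) (by ring) (by ring)⟩
  have hl₀ : l ≠ 0 := by rintro rfl; norm_num at hl
  refine ⟨l, (d - l) / c, c + d * ((d - l) / c), hl₀,
    lower_triangular_mul_eq_mul_diagonal rfl (by field_simp; ring) ?_⟩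
  field_simp
  field_simp at hl
  linear_combination hl

theorem stmt12 (c d : ℝ) (hd : d ≠ 0) :
    (∃ lam : ℝ, lam ^ 2 - ((d ^ 2 + c ^ 2 + 1) / d) * lam + 1 = 0) ∧
    (∃ (η ξ : Matrix (Fin 2) (Fin 2) ℝ) (lam : ℝ), lam ≠ 0 ∧
        (∃ α β : ℝ, η = !![α, -β; β, α]) ∧ (∃ α β : ℝ, ξ = !![α, -β; β, α]) ∧
        η * !![1, 0; c, d] * ξ = !![1, 0; 0, lam]) := by
  obtain ⟨l, hl⟩ := exists_sq_sub_mul_add_one_eq_zero (two_le_abs_sq_add_sq_add_one_div c hd)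
  obtain ⟨l', q, v, hl', hfactor⟩ := exists_lower_triangular_mul_eq_mul_diagonal c hd hl
  have hw : (1 : ℝ) ^ 2 + v ^ 2 ≠ 0 := by positivity
  refine ⟨⟨l, hl⟩, _, !![1, -q; q, 1], l', hl',
    ⟨1 / (1 ^ 2 + v ^ 2), -v / (1 ^ 2 + v ^ 2), rfl⟩, ⟨1, q, rfl⟩, ?_⟩
  rw [Matrix.mul_assoc, hfactor, ← Matrix.mul_assoc, conj_div_normSq_mul_self_fin_two hw,
    Matrix.one_mul]
end

section
/- For λ, λ' ∈ ℝ* and k ∈ ℕ, the matrices tᵏ·diag(1, λ) and tᵏ·diag(1, λ') over ℝ[[t]] are equivalent under left and right multiplication by units of End_A(P) (equivalently under the transformations of the matrix problem with coefficients in C plus matrices over (t)) if and only if λ' = λ or λ' = λ⁻¹. -/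
open Matrix PowerSeries

/-- Membership in `End_A(P) = C ∔ M₂((t))`: a matrix over `ℝ[[t]]` whose
constant-term matrix lies in `C = {[[α,-β],[β,α]]}`. -/
def inEndP (φ : Matrix (Fin 2) (Fin 2) (PowerSeries ℝ)) : Prop :=
  ∃ α β : ℝ, φ.map constantCoeff = !![α, -β; β, α]

/-!
Reducing modulo `t` and cancelling `tᵏ`, an equivalence gives real matrices `p, q ∈ C ≅ ℂ` with
`p * diag(1, λ) * q = diag(1, λ')`. On `ℝ² = ℂ`, `diag(1, λ)` is `z ↦ ((1 + λ) z + (1 - λ) z̄) / 2`,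
and multiplying by complex numbers on both sides preserves the ratio `|1 + λ| : |1 - λ|`, which
determines `λ` up to `λ ↦ λ⁻¹`. Conversely, conjugating by the rotation `[[0, -1], [1, 0]]` turns
`diag(1, λ)` into `diag(-λ, -1)`, and the scalar `-λ⁻¹ ∈ C` normalises it to `diag(1, λ⁻¹)`.
-/

theorem eq_or_mul_eq_one_of_rot_mul_diagonal_mul_rot {R : Type*} [CommRing R] [IsDomain R]
    {a b c d lam lam' : R}
    (h : !![a, -b; b, a] * diagonal ![1, lam] * !![c, -d; d, c] = diagonal ![1, lam']) :
    lam' = lam ∨ lam * lam' = 1 := by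
  simp only [diagonal_vec2, mul_fin_two, ← Matrix.ext_iff, Fin.forall_fin_two, of_apply, cons_val',
    cons_val_zero, cons_val_one, empty_val', cons_val_fin_one] at h
  obtain ⟨⟨e00, e01⟩, e10, e11⟩ := h
  have hA : lam' - lam = (lam ^ 2 - 1) * (b * d) := by linear_combination lam * e00 - e11
  have hB : lam * lam' - 1 = (lam ^ 2 - 1) * (a * c) := by linear_combination e00 - lam * e11
  have hC : (lam ^ 2 - 1) * (b * c) = 0 := by linear_combination -e10 - lam * e01
  have hprod : (lam' - lam) * (lam * lam' - 1) = 0 := by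
    rw [hA, hB]; linear_combination (lam ^ 2 - 1) * (a * d) * hC
  simpa [sub_eq_zero] using hprod

def EquivEndP (φ φ' : Matrix (Fin 2) (Fin 2) (PowerSeries ℝ)) : Prop :=
  ∃ η ξ η' ξ' : Matrix (Fin 2) (Fin 2) (PowerSeries ℝ),
    inEndP η ∧ inEndP ξ ∧ inEndP η' ∧ inEndP ξ' ∧
    η * η' = 1 ∧ η' * η = 1 ∧ ξ * ξ' = 1 ∧ ξ' * ξ = 1 ∧ η * φ * ξ = φ'

theorem equivEndP_smul_iff {a : PowerSeries ℝ} (ha : a ≠ 0)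
    {φ φ' : Matrix (Fin 2) (Fin 2) (PowerSeries ℝ)} :
    EquivEndP (a • φ) (a • φ') ↔ EquivEndP φ φ' := by
  have hsmul : ∀ η ξ : Matrix (Fin 2) (Fin 2) (PowerSeries ℝ), η * (a • φ) * ξ = a • (η * φ * ξ) :=
    fun η ξ => by rw [Matrix.mul_smul, Matrix.smul_mul]
  unfold EquivEndP
  simp only [hsmul, smul_right_inj ha]

theorem inEndP_map_C (α β : ℝ) : inEndP ((!![α, -β; β, α]).map C) :=
  ⟨α, β, by ext i j; fin_cases i <;> fin_cases j <;> simp⟩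

theorem map_C_map_constantCoeff (M : Matrix (Fin 2) (Fin 2) ℝ) :
    (M.map C).map constantCoeff = M := by
  ext i j
  simp

theorem diagonal_one_C_eq_map (lam : ℝ) :
    diagonal ![1, C lam] = (diagonal ![1, lam]).map (C : ℝ →+* PowerSeries ℝ) := by
  rw [diagonal_map (map_zero C)]
  congr 1
  ext i
  fin_cases i <;> simp

theorem EquivEndP.exists_map_constantCoeff {φ φ' : Matrix (Fin 2) (Fin 2) (PowerSeries ℝ)}
    (h : EquivEndP φ φ') :
    ∃ a b c d : ℝ, !![a, -b; b, a] * φ.map constantCoeff * !![c, -d; d, c] =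
      φ'.map constantCoeff := by
  obtain ⟨η, ξ, -, -, ⟨a, b, hη⟩, ⟨c, d, hξ⟩, -, -, -, -, -, -, -, -, rfl⟩ := h
  exact ⟨a, b, c, d, by rw [← hη, ← hξ, Matrix.map_mul, Matrix.map_mul]⟩

theorem EquivEndP.refl (φ : Matrix (Fin 2) (Fin 2) (PowerSeries ℝ)) : EquivEndP φ φ := by
  have h1 : inEndP 1 := ⟨1, 0, by rw [Matrix.map_one _ (map_zero _) (map_one _)]; simp [one_fin_two]⟩
  exact ⟨1, 1, 1, 1, h1, h1, h1, h1, mul_one 1, mul_one 1, mul_one 1, mul_one 1, by simp⟩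

theorem equivEndP_map_C {D D' : Matrix (Fin 2) (Fin 2) ℝ} {a b c d a' b' c' d' : ℝ}
    (hη : !![a, -b; b, a] * !![a', -b'; b', a'] = 1)
    (hξ : !![c, -d; d, c] * !![c', -d'; d', c'] = 1)
    (h : !![a, -b; b, a] * D * !![c, -d; d, c] = D') :
    EquivEndP (D.map C) (D'.map C) := by
  refine ⟨_, _, _, _, inEndP_map_C a b, inEndP_map_C c d, inEndP_map_C a' b', inEndP_map_C c' d',
    ?_, ?_, ?_, ?_, ?_⟩ <;>
  simp only [← Matrix.map_mul, hη, mul_eq_one_comm.mp hη, hξ, mul_eq_one_comm.mp hξ, h,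
    Matrix.map_one _ (map_zero C) (map_one C)]

theorem equivEndP_diagonal_inv {lam : ℝ} (hlam : lam ≠ 0) :
    EquivEndP ((diagonal ![1, lam]).map C) ((diagonal ![1, lam⁻¹]).map C) := by
  refine equivEndP_map_C (a := 0) (b := 1) (a' := 0) (b' := -1) (c := 0) (d := -lam⁻¹) (c' := 0)
    (d' := lam) ?_ ?_ ?_
  · simp [one_fin_two]
  · simp [one_fin_two, hlam]
  · simp [diagonal_vec2, hlam]

theorem equivEndP_diagonal_iff {lam lam' : ℝ} (hlam : lam ≠ 0) :
    EquivEndP ((diagonal ![1, lam]).map C) ((diagonal ![1, lam']).map C) ↔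
      lam' = lam ∨ lam' = lam⁻¹ := by
  constructor
  · intro h
    obtain ⟨a, b, c, d, h⟩ := h.exists_map_constantCoeff
    rw [map_C_map_constantCoeff, map_C_map_constantCoeff] at h
    exact (eq_or_mul_eq_one_of_rot_mul_diagonal_mul_rot h).imp_right eq_inv_of_mul_eq_one_right
  · rintro (rfl | rfl)
    · exact EquivEndP.refl _
    · exact equivEndP_diagonal_inv hlam

theorem stmt13_general (k : ℕ) (lam lam' : ℝ) (hlam : lam ≠ 0) :
    (∃ η ξ η' ξ' : Matrix (Fin 2) (Fin 2) (PowerSeries ℝ),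
        inEndP η ∧ inEndP ξ ∧ inEndP η' ∧ inEndP ξ' ∧
        η * η' = 1 ∧ η' * η = 1 ∧ ξ * ξ' = 1 ∧ ξ' * ξ = 1 ∧
        η * ((PowerSeries.X : PowerSeries ℝ) ^ k •
              Matrix.diagonal ![1, PowerSeries.C lam]) * ξ =
          (PowerSeries.X : PowerSeries ℝ) ^ k •
            Matrix.diagonal ![1, PowerSeries.C lam']) ↔
      (lam' = lam ∨ lam' = lam⁻¹) := by
  change EquivEndP _ _ ↔ _
  rw [equivEndP_smul_iff (pow_ne_zero k X_ne_zero), diagonal_one_C_eq_map, diagonal_one_C_eq_map]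
  exact equivEndP_diagonal_iff hlam

theorem stmt13 (k : ℕ) (lam lam' : ℝ) (hlam : lam ≠ 0) (hlam' : lam' ≠ 0) :
    (∃ η ξ η' ξ' : Matrix (Fin 2) (Fin 2) (PowerSeries ℝ),
        inEndP η ∧ inEndP ξ ∧ inEndP η' ∧ inEndP ξ' ∧
        η * η' = 1 ∧ η' * η = 1 ∧ ξ * ξ' = 1 ∧ ξ' * ξ = 1 ∧
        η * ((PowerSeries.X : PowerSeries ℝ) ^ k •
              Matrix.diagonal ![1, PowerSeries.C lam]) * ξ =
          (PowerSeries.X : PowerSeries ℝ) ^ k •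
            Matrix.diagonal ![1, PowerSeries.C lam']) ↔
      (lam' = lam ∨ lam' = lam⁻¹) :=
  stmt13_general k lam lam' hlam
end

section
/- Let k ⊆ k' be a finite Galois extension of degree t with Galois group G. Then the crossed product algebra k'[G] (the twisted group algebra with multiplication a[f]·b[g] = a·f(b)[fg]) is isomorphic as a k-algebra to the matrix algebra M_t(k). -/
/-!
Letting `f ∈ G` act on `k'` and `a ∈ k'` act by multiplication, `a[f] ↦ a · f` is a `k`-linear
map `k'[G] → End_k(k')`, multiplicative because `f ∘ b = f(b) ∘ f`. It is injective by Dedekind's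
independence of characters, and both sides have `k`-dimension `t²` since `|G| = t`; a basis of
`k'` over `k` then identifies `End_k(k')` with `M_t(k)`.
-/

open scoped Classical

section CrossedProduct

variable {k k' : Type*} [Field k] [Field k'] [Algebra k k'] [FiniteDimensional k k']

noncomputable def crossedProductToEnd : ((k' ≃ₐ[k] k') → k') →ₗ[k] Module.End k k' :=
  (Fintype.linearCombination k' fun f : k' ≃ₐ[k] k' => f.toLinearMap).restrictScalars k

theorem crossedProductToEnd_apply (F : (k' ≃ₐ[k] k') → k') (x : k') :
    crossedProductToEnd F x = ∑ f : k' ≃ₐ[k] k', F f * f x := by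
  simp [crossedProductToEnd, Fintype.linearCombination_apply, LinearMap.sum_apply]

theorem crossedProductToEnd_injective :
    Function.Injective (crossedProductToEnd : ((k' ≃ₐ[k] k') → k') →ₗ[k] Module.End k k') :=
  ((linearIndependent_algHom_toLinearMap k k' k').comp _
    AlgEquiv.coe_toAlgHom_injective).fintypeLinearCombination_injective

theorem crossedProductToEnd_convolution (F H : (k' ≃ₐ[k] k') → k') :
    crossedProductToEnd (fun ρ => ∑ f : k' ≃ₐ[k] k', F f * f (H (f⁻¹ * ρ))) =
      crossedProductToEnd F * crossedProductToEnd H := by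
  ext x
  simp only [Module.End.mul_apply, crossedProductToEnd_apply, map_sum, map_mul, Finset.sum_mul]
  rw [Finset.sum_comm]
  conv_rhs => rw [Finset.sum_comm]
  refine Finset.sum_congr rfl fun f _ => ?_
  -- reindex by `ρ = f * g`
  exact Fintype.sum_equiv (Equiv.mulLeft f⁻¹) _ _ fun ρ => by
    simp [mul_assoc]

theorem crossedProductToEnd_single_one :
    crossedProductToEnd (fun ρ : k' ≃ₐ[k] k' => if ρ = 1 then (1 : k') else 0) = 1 := by
  ext x
  simp [crossedProductToEnd_apply]

theorem finrank_aut_pi_eq_finrank_end [IsGalois k k'] :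
    Module.finrank k ((k' ≃ₐ[k] k') → k') = Module.finrank k (Module.End k k') := by
  rw [Module.finrank_pi_fintype, Module.finrank_linearMap, Finset.sum_const, Finset.card_univ,
    ← Nat.card_eq_fintype_card, IsGalois.card_aut_eq_finrank, smul_eq_mul]

end CrossedProduct

/-- For a finite Galois extension `k ⊆ k'` of degree `t` with Galois group `G`,
the crossed product `k'[G]` (realised as functions `G → k'` with convolution
`(F ⋆ H)(ρ) = ∑_{f·g = ρ} F(f)·f(H(g))` and unit supported at `1`) is
isomorphic as a `k`-algebra to `M_t(k)`. -/
theorem stmt16 (k k' : Type) [Field k] [Field k'] [Algebra k k']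
    [FiniteDimensional k k'] [IsGalois k k'] :
    ∃ e : ((k' ≃ₐ[k] k') → k') ≃ₗ[k]
        Matrix (Fin (Module.finrank k k')) (Fin (Module.finrank k k')) k,
      (∀ F H : (k' ≃ₐ[k] k') → k',
          e (fun ρ => ∑ f : k' ≃ₐ[k] k', F f * f (H (f⁻¹ * ρ))) = e F * e H) ∧
      e (fun ρ => if ρ = 1 then 1 else 0) = 1 := by
  let toMatrix := LinearMap.toMatrixAlgEquiv (Module.finBasis k k')
  let e := (crossedProductToEnd.linearEquivOfInjective crossedProductToEnd_injective
    finrank_aut_pi_eq_finrank_end).trans toMatrix.toLinearEquiv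
  have he : ∀ F, e F = toMatrix (crossedProductToEnd F) := fun _ => rfl
  refine ⟨e, fun F H => ?_, ?_⟩
  · rw [he, he, he, crossedProductToEnd_convolution, map_mul]
  · rw [he, crossedProductToEnd_single_one, map_one]
end
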